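/- Let (m,n) be a coprime pair of positive integers and let R ≠ R_0 = {0,1,…,m+n−1} be the rank set of an (m,n)-Dyck path. Then ℒ(R) = 𝔠(ℛ(𝔠(R))), and consequently area(𝔠(ℒ(R))) = area(𝔠(R)) − 1, where a rank set is identified with its (m,n)-Dyck path for the purpose of taking area. -/

import Mathlib

/-- The list of ranks of the lattice points visited by a path (excluding the final
point), starting from rank `r`.  A `true` entry is a north (`u`) step, which adds `m`
to the rank; a `false` entry is an east (`d`) step, which subtracts `n`. -/
def rankWalk (m n : ℤ) : List Bool → ℤ → List ℤ
  | [], _ => []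
  | b :: bs, r => r :: rankWalk m n bs (r + if b then m else -n)

/-- An `(m,n)`-path: a word of `n` north steps (`true`) and `m` east steps (`false`). -/
def IsPathWord (m n : ℕ) (P : List Bool) : Prop :=
  P.length = m + n ∧ P.count true = n

/-- An `(m,n)`-Dyck path: an `(m,n)`-path all of whose ranks are nonnegative. -/
def IsDyckWord (m n : ℕ) (P : List Bool) : Prop :=
  IsPathWord m n P ∧ ∀ r ∈ rankWalk (m : ℤ) (n : ℤ) P 0, 0 ≤ r

/-- The rank set of a path: the ranks of its `m+n` lattice points other than the endpoint. -/
def rankSet (m n : ℕ) (P : List Bool) : Finset ℤ :=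
  (rankWalk (m : ℤ) (n : ℤ) P 0).toFinset

/-- `R` is the rank set of some `(m,n)`-path. -/
def IsRankSet (m n : ℕ) (R : Finset ℤ) : Prop :=
  ∃ P : List Bool, IsPathWord m n P ∧ rankSet m n P = R

/-- `R` is the rank set of some `(m,n)`-Dyck path. -/
def IsDyckRankSet (m n : ℕ) (R : Finset ℤ) : Prop :=
  ∃ P : List Bool, IsDyckWord m n P ∧ rankSet m n P = R

/-- The rank complement `𝔠(R) = (max R) - R`. -/
def rankCompl (R : Finset ℤ) : Finset ℤ :=
  R.image (fun r => WithBot.unbotD 0 R.max - r)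

/-- The rank set `R₀ = {0, 1, …, m+n-1}` of the unique Dyck path of area `0`. -/
def baseRankSet (m n : ℕ) : Finset ℤ :=
  (Finset.range (m + n)).image (fun i : ℕ => (i : ℤ))

/-- The left operation `ℒ(R) = ((R \ {0}) ∪ {m+n}) - min (R \ {0})`. -/
def leftOp (m n : ℕ) (R : Finset ℤ) : Finset ℤ :=
  ((R.erase 0) ∪ {((m : ℤ) + n)}).image
    (fun r => r - WithTop.untopD 0 (R.erase 0).min)

/-- The right operation `ℛ(R) = (R \ {max R}) ∪ {max R - m - n}`. -/
def rightOp (m n : ℕ) (R : Finset ℤ) : Finset ℤ :=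
  (R.erase (WithBot.unbotD 0 R.max)) ∪ {WithBot.unbotD 0 R.max - m - n}

/-- The lattice point of the path `P` reached after `i` steps. -/
def pathPt (P : List Bool) : ℕ → ℤ × ℤ
  | 0 => (0, 0)
  | i + 1 => pathPt P i + (if P.getD i false then (0, 1) else (1, 0))

/- `area P` is the number of unit lattice squares lying to the right of the path `P`
and to the left of the diagonal `y = (n/m)x`: the square with lower-left corner
`(x, y)` is to the left of the diagonal iff its lower-right corner is weakly above
the diagonal, i.e. `n(x+1) ≤ my`, and it is to the right of the path iff the north
step of the path at height `y` starts at a point with first coordinate `≤ x`. -/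
open Classical in

noncomputable def area (m n : ℕ) (P : List Bool) : ℕ :=
  ((Finset.range m ×ˢ Finset.range n).filter (fun q =>
      (n : ℤ) * (q.1 + 1) ≤ (m : ℤ) * q.2 ∧
      ∃ i < P.length, P.getD i false = true ∧
        (pathPt P i).2 = (q.2 : ℤ) ∧ (pathPt P i).1 ≤ (q.1 : ℤ))).card

/-!
Let `M = max R`. As `0 = min R`, the complement `𝔠` is an involution preserving the maximum, and
with `μ = min (R ∖ {0})` both `ℒ(R)` and `𝔠(ℛ(𝔠(R)))` equal `((R ∖ {0}) ∪ {m + n}) - μ`.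

For the areas, coprimality makes the `m + n` ranks of a path distinct, so `R ≠ R₀` forces
`M ≥ m + n`. Then the path `P'` of `𝔠(R)`, whose maximum is also `M`, reaches rank `M` by a
north step followed by an east step. Swapping this `NE` to `EN` replaces the rank `M` by
`M - m - n` and leaves the other ranks alone, so the new path has rank set
`ℛ(𝔠(R)) = 𝔠(ℒ(R))`, and is therefore `P`. The swap removes exactly the square in the corner of
the peak, which lies below the diagonal because `M ≥ m + n`.
-/

open Finset

section Extremes

variable {α : Type*} [LinearOrder α] {s : Finset α} {a d : α}

lemma unbotD_max_eq_of_isGreatest (h : IsGreatest (s : Set α) a) : WithBot.unbotD d s.max = a := by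
  rw [← coe_max' ⟨a, h.1⟩, WithBot.unbotD_coe]
  exact (isGreatest_max' s _).unique h

lemma untopD_min_eq_of_isLeast (h : IsLeast (s : Set α) a) : WithTop.untopD d s.min = a := by
  rw [← coe_min' ⟨a, h.1⟩, WithTop.untopD_coe]
  exact (isLeast_min' s _).unique h

end Extremes

section RankSetAlgebra

variable {m n : ℕ} {R : Finset ℤ} {M x : ℤ}

lemma mem_rankCompl (hM : IsGreatest (R : Set ℤ) M) : x ∈ rankCompl R ↔ M - x ∈ R := by
  rw [rankCompl, unbotD_max_eq_of_isGreatest hM, mem_image]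
  exact ⟨by rintro ⟨r, hr, rfl⟩; simpa using hr, fun h => ⟨M - x, h, sub_sub_cancel M x⟩⟩

lemma isGreatest_rankCompl (h0 : 0 ∈ R) (hR : ∀ r ∈ R, 0 ≤ r) (hM : IsGreatest (R : Set ℤ) M) :
    IsGreatest (rankCompl R : Set ℤ) M := by
  refine ⟨(mem_rankCompl hM).2 (by simpa using h0), fun y hy => ?_⟩
  have := hR _ ((mem_rankCompl hM).1 hy)
  linarith

lemma rankCompl_rankCompl (h0 : 0 ∈ R) (hR : ∀ r ∈ R, 0 ≤ r) : rankCompl (rankCompl R) = R := by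
  have hM := isGreatest_max' R ⟨0, h0⟩
  ext y
  rw [mem_rankCompl (isGreatest_rankCompl h0 hR hM), mem_rankCompl hM, sub_sub_cancel]

lemma mem_rightOp (hM : IsGreatest (R : Set ℤ) M) :
    x ∈ rightOp m n R ↔ (x ≠ M ∧ x ∈ R) ∨ x = M - m - n := by
  rw [rightOp, unbotD_max_eq_of_isGreatest hM, mem_union, mem_erase, mem_singleton]

lemma nonneg_of_mem_rightOp (hR : ∀ r ∈ R, 0 ≤ r) (hM : IsGreatest (R : Set ℤ) M)
    (hMmn : (m + n : ℤ) ≤ M) : ∀ y ∈ rightOp m n R, 0 ≤ y := by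
  intro y hy
  rcases (mem_rightOp hM).1 hy with ⟨-, hy⟩ | rfl
  exacts [hR y hy, by linarith]

lemma leftOp_eq_rankCompl_rightOp_rankCompl {r : ℤ} (h0 : 0 ∈ R) (hR : ∀ s ∈ R, 0 ≤ s)
    (hr : r ∈ R) (hr0 : r ≠ 0) (hrmn : r ≤ m + n) :
    leftOp m n R = rankCompl (rightOp m n (rankCompl R)) := by
  obtain ⟨M, hM⟩ : ∃ M, IsGreatest (R : Set ℤ) M := ⟨_, isGreatest_max' R ⟨0, h0⟩⟩
  obtain ⟨μ, hμ⟩ : ∃ μ, IsLeast (R.erase 0 : Set ℤ) μ :=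
    ⟨_, isLeast_min' _ ⟨r, mem_erase.2 ⟨hr0, hr⟩⟩⟩
  have hS := isGreatest_rankCompl h0 hR hM
  obtain ⟨hμ0, hμR⟩ := mem_erase.1 hμ.1
  have hT : IsGreatest (rightOp m n (rankCompl R) : Set ℤ) (M - μ) := by
    refine ⟨(mem_rightOp hS).2 (Or.inl ⟨by omega, (mem_rankCompl hM).2 (by simpa using hμR)⟩),
      fun y hy => ?_⟩
    rcases (mem_rightOp hS).1 hy with ⟨hyM, hy⟩ | rfl
    · have := hμ.2 (mem_erase.2 ⟨by omega, (mem_rankCompl hM).1 hy⟩)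
      linarith
    · have := hμ.2 (mem_erase.2 ⟨hr0, hr⟩)
      linarith
  ext y
  rw [leftOp, untopD_min_eq_of_isLeast hμ, mem_rankCompl hT, mem_rightOp hS, mem_rankCompl hM]
  simp only [mem_image, mem_union, mem_erase, mem_singleton]
  constructor
  · rintro ⟨s, ⟨hs0, hs⟩ | rfl, rfl⟩
    · exact Or.inl ⟨by omega, by convert hs using 1; ring⟩
    · exact Or.inr (by ring)
  · rintro (⟨hy, hyR⟩ | hy)
    · exact ⟨y + μ, Or.inl ⟨by omega, by convert hyR using 1; ring⟩, by ring⟩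
    · exact ⟨m + n, Or.inr rfl, by linarith⟩

end RankSetAlgebra

def latticeRank (m n : ℕ) (p : ℤ × ℤ) : ℤ := m * p.2 - n * p.1

section Paths

variable {m n : ℕ} {P Q : List Bool} {i j : ℕ}

lemma pathPt_append_of_le (A L : List Bool) (hi : i ≤ A.length) :
    pathPt (A ++ L) i = pathPt A i := by
  induction i with
  | zero => rfl
  | succ i ih => rw [pathPt, pathPt, ih (by omega), List.getD_append _ _ _ _ (by omega)]

lemma pathPt_append_add (A L : List Bool) (j : ℕ) :
    pathPt (A ++ L) (A.length + j) = pathPt A A.length + pathPt L j := by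
  induction j with
  | zero => simp [pathPt_append_of_le, pathPt]
  | succ j ih =>
    rw [← add_assoc, pathPt, ih, pathPt, List.getD_append_right _ _ _ _ (by omega),
      Nat.add_sub_cancel_left, add_assoc]

lemma pathPt_cons_succ (b : Bool) (L : List Bool) (j : ℕ) :
    pathPt (b :: L) (j + 1) = (if b then (0, 1) else (1, 0)) + pathPt L j := by
  rw [add_comm j]
  simpa [pathPt, Prod.ext_iff] using pathPt_append_add [b] L j

lemma pathPt_fst_add_snd (P : List Bool) (i : ℕ) : (pathPt P i).1 + (pathPt P i).2 = i := by
  induction i with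
  | zero => rfl
  | succ i ih => rw [pathPt]; split <;> simp only [Prod.fst_add, Prod.snd_add] <;> omega

lemma pathPt_length (P : List Bool) :
    pathPt P P.length = ((P.count false : ℤ), (P.count true : ℤ)) := by
  induction P with
  | nil => rfl
  | cons b P ih => cases b <;> simp [pathPt_cons_succ, ih, add_comm]

lemma pathPt_length_of_isPathWord (hP : IsPathWord m n P) :
    pathPt P P.length = ((m : ℤ), (n : ℤ)) := by
  obtain ⟨hlen, hcount⟩ := hP
  have := P.count_false_add_count_true
  rw [pathPt_length, hcount]
  simp only [Prod.mk.injEq, and_true]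
  omega

lemma monotone_snd_pathPt (P : List Bool) : Monotone fun i => (pathPt P i).2 :=
  monotone_nat_of_le_succ fun i => by simp only [pathPt]; split <;> simp

lemma snd_pathPt_lt_of_getD (hN : P.getD i false = true) (hij : i < j) :
    (pathPt P i).2 < (pathPt P j).2 :=
  calc (pathPt P i).2 < (pathPt P (i + 1)).2 := by rw [pathPt, hN]; simp
    _ ≤ (pathPt P j).2 := monotone_snd_pathPt P hij

lemma eq_of_pathPt_eq (hlen : P.length = Q.length) (h : ∀ i ≤ P.length, pathPt P i = pathPt Q i) :
    P = Q := by
  refine List.ext_getElem hlen fun i hi hi' => ?_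
  have hstep := h (i + 1) hi
  rw [pathPt, pathPt, h i hi.le, List.getD_eq_getElem _ _ hi, List.getD_eq_getElem _ _ hi'] at hstep
  revert hstep
  cases P[i] <;> cases Q[i] <;> simp

lemma latticeRank_pathPt (P : List Bool) (i : ℕ) :
    latticeRank m n (pathPt P i) = (m + n) * (pathPt P i).2 - n * i := by
  rw [latticeRank, ← pathPt_fst_add_snd P i]
  ring

@[simp]
lemma latticeRank_pathPt_zero (P : List Bool) : latticeRank m n (pathPt P 0) = 0 := by
  simp [pathPt, latticeRank]

lemma latticeRank_pathPt_succ (P : List Bool) (i : ℕ) :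
    latticeRank m n (pathPt P (i + 1)) =
      latticeRank m n (pathPt P i) + if P.getD i false then (m : ℤ) else -n := by
  rw [pathPt]
  split <;> simp only [latticeRank, Prod.fst_add, Prod.snd_add] <;> ring

/-- `latticeRank m n (pathPt P i) ≡ -n * i (mod m + n)`, and `n` is invertible modulo `m + n`. -/
lemma pathPt_eq_of_latticeRank_eq (hcop : Nat.Coprime m n) (hi : i < m + n) (hj : j < m + n)
    (h : latticeRank m n (pathPt P i) = latticeRank m n (pathPt Q j)) :
    i = j ∧ pathPt P i = pathPt Q j := by
  rw [latticeRank_pathPt, latticeRank_pathPt] at h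
  have hcop' : IsCoprime ((m : ℤ) + n) n := by
    exact_mod_cast Nat.isCoprime_iff_coprime.2 (Nat.coprime_add_self_left.2 hcop)
  have hdvd : ((m : ℤ) + n) ∣ (i - j : ℤ) :=
    hcop'.dvd_of_dvd_mul_left ⟨(pathPt P i).2 - (pathPt Q j).2, by linarith⟩
  have hij : (i - j : ℤ) = 0 := Int.eq_zero_of_abs_lt_dvd hdvd (by rw [abs_lt]; omega)
  obtain rfl : i = j := by omega
  have hy : (pathPt P i).2 = (pathPt Q i).2 :=
    mul_left_cancel₀ (by omega : ((m : ℤ) + n) ≠ 0) (by linarith)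
  have hx := (pathPt_fst_add_snd P i).trans (pathPt_fst_add_snd Q i).symm
  exact ⟨rfl, Prod.ext (by omega) hy⟩

lemma rankWalk_eq_map (m n : ℕ) (P : List Bool) (r : ℤ) :
    rankWalk m n P r = (List.range P.length).map fun i => r + latticeRank m n (pathPt P i) := by
  induction P generalizing r with
  | nil => rfl
  | cons b P ih =>
    rw [rankWalk, ih, List.length_cons, List.range_succ_eq_map, List.map_cons, List.map_map]
    congr 1
    · simp [pathPt, latticeRank]
    · refine List.map_congr_left fun i _ => ?_
      rw [Function.comp_apply, pathPt_cons_succ]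
      cases b <;> simp only [latticeRank, Prod.fst_add, Prod.snd_add, Bool.false_eq_true,
        if_true, if_false] <;> ring

lemma rankSet_eq_image (m n : ℕ) (P : List Bool) :
    rankSet m n P = (range P.length).image fun i => latticeRank m n (pathPt P i) := by
  ext x
  simp [rankSet, rankWalk_eq_map]

lemma mem_rankSet {x : ℤ} :
    x ∈ rankSet m n P ↔ ∃ i < P.length, latticeRank m n (pathPt P i) = x := by
  simp [rankSet_eq_image]

lemma card_rankSet (hcop : Nat.Coprime m n) (hP : P.length = m + n) :
    (rankSet m n P).card = m + n := by
  rw [rankSet_eq_image, card_image_of_injOn, card_range, hP]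
  intro i hi j hj h
  simp only [coe_range, Set.mem_Iio] at hi hj
  exact (pathPt_eq_of_latticeRank_eq hcop (hP ▸ hi) (hP ▸ hj) h).1

lemma eq_of_rankSet_eq (hcop : Nat.Coprime m n) (hP : IsPathWord m n P) (hQ : IsPathWord m n Q)
    (h : rankSet m n P = rankSet m n Q) : P = Q := by
  have hlen : P.length = Q.length := hP.1.trans hQ.1.symm
  refine eq_of_pathPt_eq hlen fun i hi => ?_
  rcases hi.lt_or_eq with hi | rfl
  · obtain ⟨j, hj, hji⟩ := mem_rankSet.1 (h ▸ mem_rankSet.2 ⟨i, hi, rfl⟩)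
    obtain ⟨rfl, hpt⟩ := pathPt_eq_of_latticeRank_eq hcop (hQ.1 ▸ hj) (hP.1 ▸ hi) hji
    exact hpt.symm
  · rw [pathPt_length_of_isPathWord hP, hlen, pathPt_length_of_isPathWord hQ]

end Paths

section DyckRanks

variable {m n : ℕ} {P : List Bool} {M : ℤ}

lemma zero_mem_rankSet (hP : 0 < P.length) : (0 : ℤ) ∈ rankSet m n P :=
  mem_rankSet.2 ⟨0, hP, latticeRank_pathPt_zero P⟩

lemma nonneg_of_mem_rankSet (hP : IsDyckWord m n P) : ∀ r ∈ rankSet m n P, 0 ≤ r :=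
  fun r hr => hP.2 r (List.mem_toFinset.1 hr)

lemma m_mem_rankSet (hm : 0 < m) (hn : 0 < n) (hP : IsDyckWord m n P) :
    (m : ℤ) ∈ rankSet m n P := by
  have hr := (mem_rankSet (m := m) (n := n)).2 ⟨0 + 1, by rw [hP.1.1]; omega, rfl⟩
  rw [latticeRank_pathPt_succ, latticeRank_pathPt_zero, zero_add] at hr
  have hr0 := nonneg_of_mem_rankSet hP _ hr
  split_ifs at hr hr0
  · exact hr
  · omega

lemma add_le_of_isGreatest_rankSet (hcop : Nat.Coprime m n) (hP : IsDyckWord m n P)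
    (hne : rankSet m n P ≠ baseRankSet m n) (hM : IsGreatest (rankSet m n P : Set ℤ) M) :
    (m + n : ℤ) ≤ M := by
  by_contra! hlt
  refine hne (eq_of_subset_of_card_le (fun r hr => ?_) ?_)
  · have := nonneg_of_mem_rankSet hP r hr
    have := hM.2 hr
    exact mem_image.2 ⟨r.toNat, mem_range.2 (by omega), by omega⟩
  · rw [card_rankSet hcop hP.1.1]
    exact card_image_le.trans (card_range _).le

lemma latticeRank_pathPt_le (hP : IsPathWord m n P) (hM : IsGreatest (rankSet m n P : Set ℤ) M)
    {i : ℕ} (hi : i ≤ P.length) : latticeRank m n (pathPt P i) ≤ M := by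
  rcases hi.lt_or_eq with hi | rfl
  · exact hM.2 (mem_rankSet.2 ⟨i, hi, rfl⟩)
  · obtain ⟨j, hj, -⟩ := mem_rankSet.1 hM.1
    have := hM.2 (zero_mem_rankSet (m := m) (n := n) (by omega : 0 < P.length))
    simpa [pathPt_length_of_isPathWord hP, latticeRank, mul_comm] using this

lemma exists_peak (hm : 0 < m) (hn : 0 < n) (hP : IsPathWord m n P)
    (hM : IsGreatest (rankSet m n P : Set ℤ) M) (hMmn : (m + n : ℤ) ≤ M) :
    ∃ A B, P = A ++ true :: false :: B ∧ latticeRank m n (pathPt A A.length) + m = M := by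
  obtain ⟨j, hj, hjM⟩ := mem_rankSet.1 hM.1
  obtain ⟨k, rfl⟩ : ∃ k, j = k + 1 :=
    Nat.exists_eq_succ_of_ne_zero (by rintro rfl; rw [latticeRank_pathPt_zero] at hjM; omega)
  have h₀ := latticeRank_pathPt_le hP hM (i := k) (by omega)
  have h₂ := latticeRank_pathPt_le hP hM (i := k + 1 + 1) (by omega)
  rw [latticeRank_pathPt_succ] at h₂
  have hstep : M = latticeRank m n (pathPt P k) + if P.getD k false then (m : ℤ) else -n :=
    hjM ▸ latticeRank_pathPt_succ P k
  have hk : P.getD k false = true := by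
    by_contra h
    rw [if_neg h] at hstep
    omega
  have hk₁ : P.getD (k + 1) false = false := by
    by_contra h
    rw [if_pos (Bool.not_eq_false _ ▸ h), hjM] at h₂
    omega
  have hdrop : P.drop k = true :: false :: P.drop (k + 2) := by
    rw [List.drop_eq_getElem_cons (by omega), List.drop_eq_getElem_cons (by omega),
      ← List.getD_eq_getElem _ false, ← List.getD_eq_getElem _ false, hk, hk₁]
  have hA : (P.take k).length = k := List.length_take_of_le (by omega)
  refine ⟨P.take k, P.drop (k + 2), by rw [← hdrop, List.take_append_drop], ?_⟩
  rw [hA, ← pathPt_append_of_le (P.take k) (P.drop k) hA.ge, List.take_append_drop]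
  rw [if_pos hk] at hstep
  exact hstep.symm

end DyckRanks

def IsNorthStart (P : List Bool) (p : ℤ × ℤ) : Prop :=
  ∃ i < P.length, P.getD i false = true ∧ pathPt P i = p

def IsRightOf (P : List Bool) (x y : ℤ) : Prop :=
  ∃ p, IsNorthStart P p ∧ p.2 = y ∧ p.1 ≤ x

lemma isRightOf_iff {P : List Bool} {x y : ℤ} : IsRightOf P x y ↔
    ∃ i < P.length, P.getD i false = true ∧ (pathPt P i).2 = y ∧ (pathPt P i).1 ≤ x :=
  ⟨fun ⟨_, ⟨i, hi, hN, hp⟩, hy, hx⟩ => ⟨i, hi, hN, hp ▸ hy, hp ▸ hx⟩,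
    fun ⟨i, hi, hN, hy, hx⟩ => ⟨_, ⟨i, hi, hN, rfl⟩, hy, hx⟩⟩

open Classical in
lemma area_eq_card_isRightOf (m n : ℕ) (P : List Bool) :
    area m n P = ((range m ×ˢ range n).filter fun q : ℕ × ℕ =>
      (n : ℤ) * (q.1 + 1) ≤ (m : ℤ) * q.2 ∧ IsRightOf P q.1 q.2).card := by
  unfold area
  congr 1
  ext q
  simp only [mem_filter, isRightOf_iff]

lemma IsNorthStart.eq_of_snd_eq {P : List Bool} {p q : ℤ × ℤ} (hp : IsNorthStart P p)
    (hq : IsNorthStart P q) (h : p.2 = q.2) : p = q := by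
  obtain ⟨i, -, hNi, rfl⟩ := hp
  obtain ⟨j, -, hNj, rfl⟩ := hq
  rcases lt_trichotomy i j with hij | rfl | hij
  · exact absurd h (snd_pathPt_lt_of_getD hNi hij).ne
  · rfl
  · exact absurd h (snd_pathPt_lt_of_getD hNj hij).ne'

section Swap

variable (A B : List Bool)

lemma getD_swap {i : ℕ} (h₀ : i ≠ A.length) (h₁ : i ≠ A.length + 1) :
    (A ++ true :: false :: B).getD i false = (A ++ false :: true :: B).getD i false := by
  rcases lt_or_gt_of_ne h₀ with hi | hi
  · rw [List.getD_append _ _ _ _ hi, List.getD_append _ _ _ _ hi]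
  · obtain ⟨j, rfl⟩ : ∃ j, i = A.length + (j + 2) := ⟨i - A.length - 2, by omega⟩
    simp only [List.getD_append_right _ _ _ _ hi.le, Nat.add_sub_cancel_left, List.getD_cons_succ]

lemma pathPt_swap {i : ℕ} (h : i ≠ A.length + 1) :
    pathPt (A ++ true :: false :: B) i = pathPt (A ++ false :: true :: B) i := by
  rcases le_or_gt i A.length with hi | hi
  · rw [pathPt_append_of_le _ _ hi, pathPt_append_of_le _ _ hi]
  · obtain ⟨j, rfl⟩ : ∃ j, i = A.length + (j + 1 + 1) := ⟨i - A.length - 2, by omega⟩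
    simp only [pathPt_append_add, pathPt_cons_succ, if_true, Bool.false_eq_true, if_false]
    abel

lemma isNorthStart_swap_left :
    IsNorthStart (A ++ true :: false :: B) (pathPt A A.length) :=
  ⟨A.length, by simp, by simp, pathPt_append_of_le _ _ le_rfl⟩

lemma isNorthStart_swap_right :
    IsNorthStart (A ++ false :: true :: B) (pathPt A A.length + (1, 0)) :=
  ⟨A.length + 1, by simp, by simp, by rw [pathPt_append_add]; simp [pathPt]⟩

lemma isNorthStart_swap_iff {p : ℤ × ℤ} (hp : p.2 ≠ (pathPt A A.length).2) :
    IsNorthStart (A ++ true :: false :: B) p ↔ IsNorthStart (A ++ false :: true :: B) p := by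
  constructor
  · rintro ⟨i, hi, hN, rfl⟩
    have h₀ : i ≠ A.length := by rintro rfl; simp [pathPt_append_of_le] at hp
    have h₁ : i ≠ A.length + 1 := by rintro rfl; simp at hN
    exact ⟨i, by simpa using hi, getD_swap A B h₀ h₁ ▸ hN, (pathPt_swap A B h₁).symm⟩
  · rintro ⟨i, hi, hN, rfl⟩
    have h₀ : i ≠ A.length := by rintro rfl; simp at hN
    have h₁ : i ≠ A.length + 1 := by rintro rfl; rw [pathPt_append_add] at hp; simp [pathPt] at hp
    exact ⟨i, by simpa using hi, getD_swap A B h₀ h₁ ▸ hN, pathPt_swap A B h₁⟩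

lemma isRightOf_swap_iff (x y : ℤ) :
    IsRightOf (A ++ true :: false :: B) x y ↔
      IsRightOf (A ++ false :: true :: B) x y ∨ (x, y) = pathPt A A.length := by
  have hP := isNorthStart_swap_left A B
  have hQ := isNorthStart_swap_right A B
  by_cases hy : y = (pathPt A A.length).2
  · subst hy
    constructor
    · rintro ⟨p, hp, hpy, hpx⟩
      obtain rfl := hp.eq_of_snd_eq hP hpy
      rcases hpx.lt_or_eq with hx | rfl
      · exact Or.inl ⟨_, hQ, by simp, by simp only [Prod.fst_add]; omega⟩
      · exact Or.inr rfl
    · rintro (⟨p, hp, hpy, hpx⟩ | h)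
      · obtain rfl := hp.eq_of_snd_eq hQ (by simpa using hpy)
        exact ⟨_, hP, rfl, by simp only [Prod.fst_add] at hpx; omega⟩
      · exact ⟨_, hP, rfl, by rw [← h]⟩
  · rw [or_iff_left fun h => hy (by rw [← h])]
    exact exists_congr fun p =>
      and_congr_left fun ⟨hpy, _⟩ => isNorthStart_swap_iff A B (hpy ▸ hy)

lemma not_isRightOf_swap :
    ¬ IsRightOf (A ++ false :: true :: B) (pathPt A A.length).1 (pathPt A A.length).2 := by
  rintro ⟨p, hp, hpy, hpx⟩
  obtain rfl := hp.eq_of_snd_eq (isNorthStart_swap_right A B) (by simpa using hpy)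
  simp at hpx

end Swap

section SwapRanksAndArea

variable {m n : ℕ} (A B : List Bool)

lemma isPathWord_swap (hP : IsPathWord m n (A ++ true :: false :: B)) :
    IsPathWord m n (A ++ false :: true :: B) := by
  simpa [IsPathWord, List.count_cons, add_comm, add_left_comm] using hP

lemma rankSet_swap (hcop : Nat.Coprime m n) (hlen : (A ++ true :: false :: B).length = m + n)
    (hM : IsGreatest (rankSet m n (A ++ true :: false :: B) : Set ℤ)
      (latticeRank m n (pathPt A A.length) + m)) :
    rankSet m n (A ++ false :: true :: B) =
      rightOp m n (rankSet m n (A ++ true :: false :: B)) := by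
  simp only [List.length_append, List.length_cons] at hlen
  have hpeak : pathPt (A ++ true :: false :: B) (A.length + 1) = pathPt A A.length + (0, 1) := by
    rw [pathPt_append_add]; simp [pathPt]
  have hvalley : pathPt (A ++ false :: true :: B) (A.length + 1) = pathPt A A.length + (1, 0) := by
    rw [pathPt_append_add]; simp [pathPt]
  ext x
  rw [mem_rightOp hM, mem_rankSet, mem_rankSet]
  simp only [List.length_append, List.length_cons]
  constructor
  · rintro ⟨i, hi, rfl⟩
    by_cases hik : i = A.length + 1
    · subst hik
      right
      simp only [latticeRank, hvalley, Prod.snd_add, Prod.fst_add, add_zero]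
      ring
    · refine Or.inl ⟨fun h => hik ?_, i, hi, by rw [pathPt_swap A B hik]⟩
      rw [← pathPt_swap A B hik] at h
      refine (pathPt_eq_of_latticeRank_eq (Q := A ++ true :: false :: B) hcop (by omega) (by omega)
        (h.trans ?_)).1
      simp only [hpeak, latticeRank, Prod.fst_add, Prod.snd_add]
      ring
  · rintro (⟨hxM, i, hi, rfl⟩ | rfl)
    · have hik : i ≠ A.length + 1 := by
        rintro rfl
        simp only [hpeak, latticeRank, Prod.fst_add, Prod.snd_add] at hxM
        exact hxM (by ring)
      exact ⟨i, hi, by rw [pathPt_swap A B hik]⟩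
    · refine ⟨A.length + 1, by omega, ?_⟩
      simp only [latticeRank, hvalley, Prod.snd_add, Prod.fst_add, add_zero]
      ring

lemma area_swap (hdiag : n * (A.count false + 1) ≤ m * A.count true) (hA : A.count true < n) :
    area m n (A ++ true :: false :: B) = area m n (A ++ false :: true :: B) + 1 := by
  have hc := pathPt_length A
  have hAm : A.count false < m := by nlinarith
  have hcorner := not_isRightOf_swap A B
  rw [hc] at hcorner
  classical
  rw [area_eq_card_isRightOf, area_eq_card_isRightOf,
    ← card_insert_of_notMem (a := (A.count false, A.count true))]
  · congr 1
    ext q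
    simp only [mem_filter, mem_insert, mem_product, mem_range, isRightOf_swap_iff, hc,
      Prod.ext_iff, Nat.cast_inj]
    constructor
    · rintro ⟨hbox, hd, hr | hq⟩
      exacts [Or.inr ⟨hbox, hd, hr⟩, Or.inl hq]
    · rintro (⟨h₁, h₂⟩ | ⟨hbox, hd, hr⟩)
      · refine ⟨⟨h₁ ▸ hAm, h₂ ▸ hA⟩, ?_, Or.inr ⟨h₁, h₂⟩⟩
        rw [h₁, h₂]
        exact_mod_cast hdiag
      · exact ⟨hbox, hd, Or.inl hr⟩
  · simp [mem_filter, hcorner]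

end SwapRanksAndArea

/-- For the rank set `R ≠ R₀` of an `(m,n)`-Dyck path, we have
`ℒ(R) = 𝔠(ℛ(𝔠(R)))`, and consequently `area(𝔠(ℒ(R))) = area(𝔠(R)) - 1`, a rank set
being identified with its `(m,n)`-Dyck path for the purpose of taking area. -/
theorem leftOp_eq_compl_rightOp_compl (m n : ℕ) (hm : 0 < m) (hn : 0 < n)
    (hcop : Nat.Coprime m n) (R : Finset ℤ) (hR : IsDyckRankSet m n R)
    (hne : R ≠ baseRankSet m n) :
    leftOp m n R = rankCompl (rightOp m n (rankCompl R)) ∧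
    ∀ P P' : List Bool, IsDyckWord m n P → IsDyckWord m n P' →
      rankSet m n P = rankCompl (leftOp m n R) → rankSet m n P' = rankCompl R →
      area m n P' = area m n P + 1 := by
  obtain ⟨P₀, hP₀, rfl⟩ := hR
  have h0 : (0 : ℤ) ∈ rankSet m n P₀ := zero_mem_rankSet (by rw [hP₀.1.1]; omega)
  have hnonneg := nonneg_of_mem_rankSet hP₀
  have hL := leftOp_eq_rankCompl_rightOp_rankCompl (m := m) (n := n) h0 hnonneg
    (m_mem_rankSet hm hn hP₀) (by omega) (by omega)
  refine ⟨hL, fun P P' hP hP' hPR hP'R => ?_⟩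
  obtain ⟨M, hM⟩ : ∃ M, IsGreatest (rankSet m n P₀ : Set ℤ) M := ⟨_, isGreatest_max' _ ⟨0, h0⟩⟩
  have hMmn := add_le_of_isGreatest_rankSet hcop hP₀ hne hM
  have hM' : IsGreatest (rankSet m n P' : Set ℤ) M := hP'R ▸ isGreatest_rankCompl h0 hnonneg hM
  obtain ⟨A, B, rfl, hpeak⟩ := exists_peak hm hn hP'.1 hM' hMmn
  have hQ := rankSet_swap A B hcop hP'.1.1 (hpeak ▸ hM')
  obtain rfl : P = A ++ false :: true :: B := by
    refine eq_of_rankSet_eq hcop hP.1 (isPathWord_swap A B hP'.1) ?_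
    rw [hPR, hL, ← hP'R, ← hQ, rankCompl_rankCompl (zero_mem_rankSet (by simp))]
    exact hQ ▸ nonneg_of_mem_rightOp (nonneg_of_mem_rankSet hP') hM' hMmn
  have hdiag : (n : ℤ) * (A.count false + 1) ≤ m * A.count true := by
    rw [latticeRank, pathPt_length] at hpeak
    linarith
  have hA : A.count true < n := by
    have := hP'.1.2
    simp only [List.count_append, List.count_cons_self, List.count_cons_of_ne Bool.false_ne_true]
      at this
    omega
  exact area_swap A B (by exact_mod_cast hdiag) hA
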